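/- Let n ≥ 1 and let U_0, ..., U_n be indeterminates with the degree reverse lexicographic order with U_n > U_{n-1} > ... > U_0. Let X, Y be n×n matrices of indeterminates over a field K with the degree lexicographic order for which LM(f_{k,n-k}) = X_{11}⋯X_{kk}Y_{k+1,k+1}⋯Y_{nn}. Then for nonnegative integers a_0,...,a_n and b_0,...,b_n: LM(f_{0,n})^{a_0}⋯LM(f_{n,0})^{a_n} < LM(f_{0,n})^{b_0}⋯LM(f_{n,0})^{b_n} holds if and only if U_0^{a_0}⋯U_n^{a_n} < U_0^{b_0}⋯U_n^{b_n}, i.e., if and only if there exists h with 0 ≤ h ≤ n such that Σ_{k=h}^n a_k < Σ_{k=h}^n b_k and Σ_{k=h'}^n a_k = Σ_{k=h'}^n b_k for all h' < h. -/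
import Mathlib


open MvPolynomial

/-- Significance key of the variable T_{ijk} (X = (T_{ij0}), Y = (T_{ij1})):
smaller key = larger variable, realizing
X_{11} > X_{21} > ... > X_{nn} > Y_{11} > ... > Y_{nn}. -/
def varKey (n : ℕ) (v : Fin n × Fin n × Fin 2) : ℕ :=
  (v.2.2 : ℕ) * (n * n) + (v.2.1 : ℕ) * n + (v.1 : ℕ)

/-- Degree-lexicographic strict order on monomials (exponent vectors). -/
def monLT (n : ℕ) (a b : (Fin n × Fin n × Fin 2) →₀ ℕ) : Prop :=
  (a.sum fun _ e => e) < (b.sum fun _ e => e) ∨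
    ((a.sum fun _ e => e) = (b.sum fun _ e => e) ∧
      ∃ v, (∀ w, varKey n w < varKey n v → a w = b w) ∧ a v < b v)

/-- The leading monomial of f_{k,n-k}: X_{11}⋯X_{kk}·Y_{k+1,k+1}⋯Y_{nn},
as an exponent vector. -/
noncomputable def lmF (n k : ℕ) : (Fin n × Fin n × Fin 2) →₀ ℕ :=
  ∑ i : Fin n, Finsupp.single (i, i, if (i : ℕ) < k then (0 : Fin 2) else 1) 1

lemma lmF_apply (n k : ℕ) (i j : Fin n) (c : Fin 2) :
    lmF n k (i, j, c) = if i = j ∧ c = (if (i:ℕ) < k then (0:Fin 2) else 1) then 1 else 0 := by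
  classical
  rw [lmF, Finsupp.finset_sum_apply]
  rw [Finset.sum_eq_single i]
  · simp [Finsupp.single_apply, Prod.ext_iff, eq_comm]
  · intro i' _ hne
    simp [Finsupp.single_apply, Prod.ext_iff, hne]
  · simp

lemma F_apply (n : ℕ) (a : ℕ → ℕ) (i j : Fin n) (c : Fin 2) :
    (∑ k ∈ Finset.range (n+1), a k • lmF n k) (i, j, c)
      = if i = j then (if c = 0 then ∑ k ∈ Finset.Ico ((i:ℕ)+1) (n+1), a k
          else ∑ k ∈ Finset.Ico 0 ((i:ℕ)+1), a k) else 0 := by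
  classical
  rw [Finsupp.finset_sum_apply]
  simp only [Finsupp.smul_apply, lmF_apply, smul_eq_mul]
  by_cases hij : i = j
  · subst hij
    simp only [if_pos rfl, true_and]
    have hc : c = 0 ∨ c = 1 := by omega
    have hi := i.isLt
    rcases hc with rfl | rfl
    · rw [if_pos rfl]
      have H : ∀ k, (if (0:Fin 2) = (if (i:ℕ) < k then (0:Fin 2) else 1) then (1:ℕ) else 0)
          = if (i:ℕ) < k then 1 else 0 := by
        intro k; by_cases h1 : (i:ℕ) < k <;> simp [h1]
      simp only [H, mul_ite, mul_one, mul_zero]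
      rw [Finset.sum_ite, Finset.sum_const_zero, add_zero]
      refine Finset.sum_congr ?_ fun _ _ => rfl
      ext k
      simp only [Finset.mem_filter, Finset.mem_range, Finset.mem_Ico]
      omega
    · rw [if_neg (by norm_num : ¬(1:Fin 2) = 0)]
      have H : ∀ k, (if (1:Fin 2) = (if (i:ℕ) < k then (0:Fin 2) else 1) then (1:ℕ) else 0)
          = if (i:ℕ) < k then 0 else 1 := by
        intro k; by_cases h1 : (i:ℕ) < k <;> simp [h1]
      simp only [H, mul_ite, mul_one, mul_zero]
      rw [Finset.sum_ite, Finset.sum_const_zero, zero_add]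
      refine Finset.sum_congr ?_ fun _ _ => rfl
      ext k
      simp only [Finset.mem_filter, Finset.mem_range, Finset.mem_Ico]
      omega
  · simp [hij]

lemma F_deg (n : ℕ) (a : ℕ → ℕ) :
    ((∑ k ∈ Finset.range (n+1), a k • lmF n k).sum fun _ e => e)
      = n * ∑ k ∈ Finset.Ico 0 (n+1), a k := by
  classical
  rw [Finsupp.sum_fintype _ _ (fun _ => rfl)]
  rw [Fintype.sum_prod_type]
  have : ∀ i : Fin n, (∑ jc : Fin n × Fin 2,
      (∑ k ∈ Finset.range (n+1), a k • lmF n k) (i, jc.1, jc.2))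
      = ∑ k ∈ Finset.Ico 0 (n+1), a k := by
    intro i
    rw [Fintype.sum_prod_type]
    simp only [F_apply]
    rw [Finset.sum_eq_single i]
    · simp only [if_pos rfl]
      rw [Fin.sum_univ_two]
      simp only [if_pos rfl, if_neg (by norm_num : ¬(1:Fin 2) = 0)]
      norm_num
      rw [add_comm]; exact Finset.sum_range_add_sum_Ico a (by have := i.isLt; omega : (i:ℕ)+1 ≤ n+1)
    · intro j _ hne
      simp [Ne.symm hne]
    · simp
  simp only [this, Finset.sum_const, Finset.card_univ, Fintype.card_fin, smul_eq_mul]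

lemma head_tail (n : ℕ) (a : ℕ → ℕ) (m : ℕ) (hm : m + 1 ≤ n + 1) :
    (∑ k ∈ Finset.Ico 0 (m+1), a k) + (∑ k ∈ Finset.Ico (m+1) (n+1), a k)
      = ∑ k ∈ Finset.Ico 0 (n+1), a k :=
  Finset.sum_Ico_consecutive a (Nat.zero_le _) hm

theorem monLT_prod_lmF_iff (K : Type*) [Field K] (n : ℕ) (hn : 1 ≤ n)
    (a b : ℕ → ℕ) :
    monLT n (∑ k ∈ Finset.range (n + 1), a k • lmF n k)
        (∑ k ∈ Finset.range (n + 1), b k • lmF n k) ↔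
      ∃ h ≤ n, (∑ k ∈ Finset.Icc h n, a k) < (∑ k ∈ Finset.Icc h n, b k) ∧
        ∀ h' < h, (∑ k ∈ Finset.Icc h' n, a k) = (∑ k ∈ Finset.Icc h' n, b k) := by
  classical
  have hIcc : ∀ (c : ℕ → ℕ) (h : ℕ),
      (∑ k ∈ Finset.Icc h n, c k) = ∑ k ∈ Finset.Ico h (n+1), c k := by
    intro c h; rw [Finset.Ico_add_one_right_eq_Icc]
  constructor
  · rintro (hdeg | ⟨hdeg, ⟨i, j, c⟩, hw, hv⟩)
    · refine ⟨0, Nat.zero_le n, ?_, fun h' h0 => absurd h0 (Nat.not_lt_zero _)⟩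
      rw [hIcc, hIcc]
      rw [F_deg, F_deg] at hdeg
      exact lt_of_mul_lt_mul_left hdeg (Nat.zero_le n)
    · rw [F_deg, F_deg] at hdeg
      have Seq : (∑ k ∈ Finset.Ico 0 (n+1), a k) = ∑ k ∈ Finset.Ico 0 (n+1), b k :=
        Nat.eq_of_mul_eq_mul_left (by omega) hdeg
      rw [F_apply, F_apply] at hv
      by_cases hij : i = j
      · subst hij
        rw [if_pos rfl, if_pos rfl] at hv
        have hi := i.isLt
        have hc : c = 0 ∨ c = 1 := by omega
        rcases hc with rfl | rfl
        · rw [if_pos rfl, if_pos rfl] at hv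
          refine ⟨(i:ℕ)+1, by omega, by rw [hIcc, hIcc]; exact hv, ?_⟩
          intro h' hh'
          rw [hIcc, hIcc]
          rcases Nat.eq_zero_or_pos h' with rfl | hpos
          · exact Seq
          · obtain ⟨m, rfl⟩ : ∃ m, h' = m + 1 := ⟨h' - 1, by omega⟩
            have hmlt : m < (i:ℕ) := by omega
            have hkey : varKey n (⟨m, by omega⟩, ⟨m, by omega⟩, 0) < varKey n (i, i, 0) := by
              simp only [varKey, Fin.val_zero, zero_mul, zero_add]
              have : m * n ≤ (i:ℕ) * n := Nat.mul_le_mul_right n (by omega)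
              have : m * n < (i:ℕ) * n ∨ m * n = (i:ℕ) * n := by omega
              rcases this with h | h <;> omega
            have := hw _ hkey
            rw [F_apply, F_apply] at this
            simpa using this
        · exfalso
          rw [if_neg (by norm_num : ¬(1:Fin 2) = 0), if_neg (by norm_num : ¬(1:Fin 2) = 0)] at hv
          have hkey : varKey n (i, i, 0) < varKey n (i, i, 1) := by
            simp only [varKey, Fin.val_zero, Fin.val_one, zero_mul, one_mul, zero_add]
            have : 0 < n * n := by positivity
            omega
          have htail := hw _ hkey
          rw [F_apply, F_apply] at htail
          rw [if_pos rfl, if_pos rfl, if_pos rfl, if_pos rfl] at htail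
          have e1 := head_tail n a (i:ℕ) (by omega)
          have e2 := head_tail n b (i:ℕ) (by omega)
          omega
      · rw [if_neg hij, if_neg hij] at hv
        exact absurd hv (lt_irrefl 0)
  · rintro ⟨h, hhn, hlt, heq⟩
    simp only [hIcc] at hlt heq
    rcases Nat.eq_zero_or_pos h with rfl | hpos
    · left
      rw [F_deg, F_deg]
      exact mul_lt_mul_of_pos_left hlt (by omega : 0 < n)
    · obtain ⟨h0, rfl⟩ : ∃ h0, h = h0 + 1 := ⟨h - 1, by omega⟩
      right
      constructor
      · rw [F_deg, F_deg, heq 0 (by omega)]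
      · refine ⟨(⟨h0, by omega⟩, ⟨h0, by omega⟩, 0), ?_, ?_⟩
        · rintro ⟨i', j', c'⟩ hkey
          rw [F_apply, F_apply]
          by_cases hij : i' = j'
          · subst hij
            simp only [varKey, Fin.val_zero, zero_mul, zero_add] at hkey
            have hi' := i'.isLt
            have hc : c' = 0 ∨ c' = 1 := by omega
            rcases hc with rfl | rfl
            · simp only [Fin.val_zero, zero_mul, zero_add] at hkey
              have hlt' : (i':ℕ) < h0 := by
                by_contra hcon
                have : h0 * n ≤ (i':ℕ) * n := Nat.mul_le_mul_right n (by omega)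
                omega
              simpa using heq ((i':ℕ)+1) (by omega)
            · exfalso
              simp only [Fin.val_one, one_mul] at hkey
              have h1 : h0 * n ≤ (n-1) * n := Nat.mul_le_mul_right n (by omega)
              have h2 : (n-1) * n = n * n - n := Nat.sub_one_mul n n
              have h3 : n ≤ n * n := Nat.le_mul_of_pos_left n (by omega)
              omega
          · simp [hij]
        · rw [F_apply, F_apply]
          simp only [if_pos rfl]
          exact hlt
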